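/- arXiv:0810.2637 — 5 statements merged into one kernel-verified Lean document; each statement's English description precedes it below -/
import Mathlib

section
/- Let V be a two-dimensional complex vector space equipped with a nonzero symmetric bilinear form (·,·). For any two vectors v, w ∈ V with (v,w) ≠ 0, there exist a positive integer k and a complex number c such that Re(c·(v + p·w, v + q·w)) > 0 for all integers p, q ≥ k. -/
/-!
By symmetry `B (v + p • w) (v + q • w) = a + (p + q) b + p q d` with `b = B v w ≠ 0`.
Multiplying by `c = conj d` (or by `conj b` when `d = 0`) makes the real part a real polynomial
`x + (p + q) y + p q n` whose top nonzero coefficient among `n`, `y` is positive. Once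
`y + k n ≥ 0` this polynomial is nondecreasing in `p, q ≥ k`, so it is positive there as soon
as its diagonal value at `k` is, which holds for all large `k`.
-/

open Filter ComplexConjugate

lemma LinearMap.apply_add_smul_add_smul {R M : Type*} [CommRing R] [AddCommGroup M] [Module R M]
    (B : M →ₗ[R] M →ₗ[R] R) {v w : M} (hvw : B w v = B v w) (p q : R) :
    B (v + p • w) (v + q • w) = B v v + (p + q) * B v w + p * q * B w w := by
  simp only [map_add, map_smul, LinearMap.add_apply, LinearMap.smul_apply, smul_eq_mul, hvw]
  ring

lemma Complex.re_mul_add_add_mul_add_mul (a b d c : ℂ) (p q : ℝ) :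
    (c * (a + (p + q) * b + p * q * d)).re =
      (c * a).re + (p + q) * (c * b).re + p * q * (c * d).re := by
  simp only [mul_add, add_re, mul_re, ofReal_re, add_im, ofReal_im, add_zero, zero_mul, sub_zero,
    mul_im, mul_zero]
  ring

lemma Complex.exists_re_mul_nonneg_and_pos {b : ℂ} (hb : b ≠ 0) (d : ℂ) :
    ∃ c : ℂ, 0 ≤ (c * d).re ∧ (0 < (c * d).re ∨ 0 < (c * b).re) := by
  have hre (z : ℂ) : (conj z * z).re = ‖z‖ ^ 2 := by
    rw [Complex.conj_mul']; norm_cast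
  by_cases hd : d = 0
  · exact ⟨conj b, by simp [hd], Or.inr (by rw [hre]; positivity)⟩
  · exact ⟨conj d, by rw [hre]; positivity, Or.inl (by rw [hre]; positivity)⟩

lemma add_add_mul_add_mul_mul_le {x y n k p q : ℝ} (hn : 0 ≤ n) (hk : 0 ≤ y + k * n)
    (hp : k ≤ p) (hq : k ≤ q) :
    x + (k + k) * y + k * k * n ≤ x + (p + q) * y + p * q * n := by
  have hq' : 0 ≤ y + q * n := hk.trans (by gcongr)
  nlinarith [mul_nonneg (sub_nonneg.2 hp) hq', mul_nonneg (sub_nonneg.2 hq) hk]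

lemma eventually_nonneg_and_diag_pos (x : ℝ) {y n : ℝ} (hn : 0 ≤ n) (h : 0 < n ∨ 0 < y) :
    ∀ᶠ k : ℝ in atTop, 0 ≤ y + k * n ∧ 0 < x + (k + k) * y + k * k * n := by
  rcases hn.eq_or_lt with rfl | hn
  · have hy : 0 < y := h.resolve_left (lt_irrefl 0)
    have hquad : Tendsto (fun k : ℝ => x + (k + k) * y + k * k * 0) atTop atTop :=
      (tendsto_atTop_add_const_left _ x <| tendsto_id.atTop_mul_const (mul_pos two_pos hy)).congr
        fun k => by simp only [id]; ring
    simpa [hy.le] using hquad.eventually_gt_atTop 0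
  · have hlin : Tendsto (fun k : ℝ => y + k * n) atTop atTop :=
      tendsto_atTop_add_const_left _ _ <| tendsto_id.atTop_mul_const hn
    have hquad : Tendsto (fun k : ℝ => x + (k + k) * y + k * k * n) atTop atTop :=
      (tendsto_atTop_add_const_left _ x <| tendsto_id.atTop_mul_atTop₀ <|
        tendsto_atTop_add_const_left _ y hlin).congr fun k => by simp only [id]; ring
    exact (hlin.eventually_ge_atTop 0).and (hquad.eventually_gt_atTop 0)

lemma exists_forall_le_add_add_mul_add_mul_mul_pos (x : ℝ) {y n : ℝ} (hn : 0 ≤ n)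
    (h : 0 < n ∨ 0 < y) :
    ∃ k : ℕ, 0 < k ∧ ∀ p q : ℝ, k ≤ p → k ≤ q → 0 < x + (p + q) * y + p * q * n := by
  obtain ⟨k, hk, hkn, hdiag⟩ := ((eventually_gt_atTop 0).and
    (tendsto_natCast_atTop_atTop.eventually (eventually_nonneg_and_diag_pos x hn h))).exists
  exact ⟨k, hk, fun p q hp hq => hdiag.trans_le (add_add_mul_add_mul_mul_le hn hkn hp hq)⟩

theorem positivity_of_shifted_pairings_general
    (V : Type*) [AddCommGroup V] [Module ℂ V]
    (B : V →ₗ[ℂ] V →ₗ[ℂ] ℂ)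
    (hsymm : ∀ x y : V, B x y = B y x)
    (v w : V) (hvw : B v w ≠ 0) :
    ∃ k : ℕ, 0 < k ∧ ∃ c : ℂ,
      ∀ p q : ℤ, (k : ℤ) ≤ p → (k : ℤ) ≤ q →
        0 < (c * B (v + (p : ℂ) • w) (v + (q : ℂ) • w)).re := by
  obtain ⟨c, hnonneg, hpos⟩ := Complex.exists_re_mul_nonneg_and_pos hvw (B w w)
  obtain ⟨k, hk, hquad⟩ :=
    exists_forall_le_add_add_mul_add_mul_mul_pos (c * B v v).re hnonneg hpos
  refine ⟨k, hk, c, fun p q hp hq => ?_⟩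
  have h := hquad p q (by exact_mod_cast hp) (by exact_mod_cast hq)
  rw [← Complex.re_mul_add_add_mul_add_mul] at h
  simpa only [B.apply_add_smul_add_smul (hsymm w v), Complex.ofReal_intCast] using h

/-- **Lemma 3.4.** Let `V` be a two-dimensional complex vector space with a nonzero
symmetric bilinear form `B`. For any vectors `v, w` with `B v w ≠ 0` there exist a
positive integer `k` and `c ∈ ℂ` such that `Re (c * B (v + p•w) (v + q•w)) > 0`
for all integers `p, q ≥ k`. -/
theorem positivity_of_shifted_pairings
    (V : Type*) [AddCommGroup V] [Module ℂ V]
    (hdim : Module.finrank ℂ V = 2)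
    (B : V →ₗ[ℂ] V →ₗ[ℂ] ℂ)
    (hB : B ≠ 0)
    (hsymm : ∀ x y : V, B x y = B y x)
    (v w : V) (hvw : B v w ≠ 0) :
    ∃ k : ℕ, 0 < k ∧ ∃ c : ℂ,
      ∀ p q : ℤ, (k : ℤ) ≤ p → (k : ℤ) ≤ q →
        0 < (c * B (v + (p : ℂ) • w) (v + (q : ℂ) • w)).re :=
  positivity_of_shifted_pairings_general V B hsymm v w hvw
end

section
/- Fix a positive integer m and let f_m(n) denote the number of ways to write the positive integer n as a sum n = m_1 + m_2 + ⋯ + m_r with m ≤ m_1 < m_2 < ⋯ < m_r (i.e. the number of partitions of n into distinct parts, each part at least m). Then f_m grows faster than any polynomial: for every natural number d and every real C > 0 there exists N such that f_m(n) > C·n^d for all n ≥ N. -/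
/-- `fm m n` is the number of ways of writing `n` as a sum of distinct parts each of
size at least `m`, i.e. the number of finite sets `S` of natural numbers with all
elements `≥ m` and sum `n`.  (A strictly increasing sequence `m ≤ m₁ < ⋯ < m_r` is the
same thing as such a finite set.) -/
def fm (m n : ℕ) : ℕ :=
  ((Finset.range (n + 1)).powerset.filter
    (fun S => (∀ x ∈ S, m ≤ x) ∧ S.sum id = n)).card

/-!
Every `k`-element set `S ⊆ [m, B)` extends to a partition of `n ≥ (k + 1) B` into distinct
parts `≥ m` by adding the single part `n - ∑ S ≥ B`, and `S` is recovered as the parts below `B`.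
Hence `fm m n ≥ (B - m).choose k`; taking `B ≈ n / (k + 1)` makes this a polynomial of degree `k`
in `n`, and `k = d + 1` beats `C n ^ d`.
-/

open Finset
open scoped Nat

theorem card_le_fm {m n : ℕ} (s : Finset (Finset ℕ))
    (hs : ∀ S ∈ s, (∀ x ∈ S, m ≤ x) ∧ S.sum id = n) : #s ≤ fm m n := by
  refine card_le_card fun S hS => ?_
  obtain ⟨hm, hsum⟩ := hs S hS
  refine mem_filter.2 ⟨mem_powerset.2 fun x hx => mem_range.2 ?_, hm, hsum⟩
  have : x ≤ S.sum id := single_le_sum (f := id) (fun _ _ => Nat.zero_le _) hx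
  omega

theorem sum_le_mul_of_mem_powersetCard_Ico {k m B : ℕ} {S : Finset ℕ}
    (hS : S ∈ (Ico m B).powersetCard k) : S.sum id ≤ k * B := by
  obtain ⟨hsub, hcard⟩ := mem_powersetCard.1 hS
  simpa [hcard] using sum_le_card_nsmul S id B fun x hx => (mem_Ico.1 (hsub hx)).2.le

theorem filter_lt_insert_eq_of_subset_Ico {m B t : ℕ} {S : Finset ℕ} (hS : S ⊆ Ico m B)
    (ht : B ≤ t) : (insert t S).filter (· < B) = S := by
  ext x
  simp only [mem_filter, mem_insert]
  constructor
  · rintro ⟨rfl | hx, hxB⟩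
    · omega
    · exact hx
  · exact fun hx => ⟨Or.inr hx, (mem_Ico.1 (hS hx)).2⟩

theorem choose_le_fm {m k B n : ℕ} (hmB : m ≤ B) (hn : (k + 1) * B ≤ n) :
    (B - m).choose k ≤ fm m n := by
  set top : Finset ℕ → ℕ := fun S => n - S.sum id
  have top_ge : ∀ S ∈ (Ico m B).powersetCard k, B ≤ top S := fun S hS => by
    have := sum_le_mul_of_mem_powersetCard_Ico hS
    simp only [top]
    rw [add_mul, one_mul] at hn
    omega
  have top_not_mem : ∀ S ∈ (Ico m B).powersetCard k, top S ∉ S := fun S hS hmem =>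
    (top_ge S hS).not_gt (mem_Ico.1 ((mem_powersetCard.1 hS).1 hmem)).2
  have injOn : Set.InjOn (fun S => insert (top S) S) ((Ico m B).powersetCard k) := by
    intro S hS S' hS' h
    rw [← filter_lt_insert_eq_of_subset_Ico (mem_powersetCard.1 hS).1 (top_ge S hS),
      ← filter_lt_insert_eq_of_subset_Ico (mem_powersetCard.1 hS').1 (top_ge S' hS')]
    exact congrArg (filter (· < B)) h
  rw [← Nat.card_Ico m B, ← card_powersetCard, ← card_image_of_injOn injOn]
  refine card_le_fm _ fun T hT => ?_
  obtain ⟨S, hS, rfl⟩ := mem_image.1 hT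
  refine ⟨fun x hx => ?_, ?_⟩
  · rcases mem_insert.1 hx with rfl | hx
    · exact hmB.trans (top_ge S hS)
    · exact (mem_Ico.1 ((mem_powersetCard.1 hS).1 hx)).1
  · rw [sum_insert (top_not_mem S hS)]
    change n - S.sum id + S.sum id = n
    have := sum_le_mul_of_mem_powersetCard_Ico hS
    rw [add_mul, one_mul] at hn
    omega

theorem le_two_mul_mul_div_sub_add_one {a c n : ℕ} (hc : 0 < c) (hn : 2 * c * a ≤ n) :
    n ≤ 2 * c * (n / c - a + 1) := by
  have hdiv : n < c * (n / c + 1) := by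
    rw [mul_add, mul_one]; exact Nat.lt_mul_div_succ n hc
  have ha : a ≤ n / c := by
    rw [Nat.le_div_iff_mul_le hc]; nlinarith
  zify [ha] at *
  nlinarith

theorem pow_div_le_fm {m k n : ℕ} (hn : 2 * (k + 1) * (m + k) ≤ n) :
    ((n : ℝ) / (2 * (k + 1))) ^ k / k ! ≤ fm m n := by
  set B := n / (k + 1)
  have hB : m + k ≤ B := by
    rw [Nat.le_div_iff_mul_le (Nat.succ_pos k)]; nlinarith
  have hsize : n ≤ 2 * (k + 1) * (B - m + 1 - k) := by
    have := le_two_mul_mul_div_sub_add_one (c := k + 1) (by omega) hn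
    rwa [show B - m + 1 - k = B - (m + k) + 1 by omega]
  calc ((n : ℝ) / (2 * (k + 1))) ^ k / k !
      ≤ ((B - m + 1 - k : ℕ) : ℝ) ^ k / k ! := by
        gcongr
        rw [div_le_iff₀ (by positivity), mul_comm]
        exact_mod_cast hsize
    _ ≤ (B - m).choose k := Nat.pow_le_choose k (B - m)
    _ ≤ fm m n := by
        exact_mod_cast choose_le_fm (by omega) (by rw [mul_comm]; exact Nat.div_mul_le_self n _)

theorem fm_superpolynomial_growth_general (m : ℕ) (d : ℕ) (C : ℝ) :
    ∃ N : ℕ, ∀ n : ℕ, N ≤ n → C * (n : ℝ) ^ d < (fm m n : ℝ) := by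
  set K : ℝ := (2 * (d + 2)) ^ (d + 1) * (d + 1)!
  refine ⟨max (2 * (d + 2) * (m + d + 1)) (⌊C * K⌋₊ + 1), fun n hn => ?_⟩
  have hn_large : C * K < n := Nat.lt_of_floor_lt (by omega)
  have hn_pos : (0 : ℝ) < n := by exact_mod_cast (show 0 < n by omega)
  calc C * (n : ℝ) ^ d < n * n ^ d / K := by
        rw [lt_div_iff₀ (by positivity)]
        nlinarith [pow_pos hn_pos d]
    _ = ((n : ℝ) / (2 * (d + 1 + 1))) ^ (d + 1) / (d + 1)! := by
        rw [div_pow, div_div, pow_succ']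
        ring
    _ ≤ fm m n := by exact_mod_cast pow_div_le_fm (le_of_max_le_left hn)

/-- **Lemma 3.5.** For fixed `m ≥ 1`, the number `fm m n` of partitions of `n` into
distinct parts each at least `m` grows faster than any polynomial in `n`. -/
theorem fm_superpolynomial_growth (m : ℕ) (hm : 0 < m) (d : ℕ) (C : ℝ) (hC : 0 < C) :
    ∃ N : ℕ, ∀ n : ℕ, N ≤ n → C * (n : ℝ) ^ d < (fm m n : ℝ) :=
  fm_superpolynomial_growth_general m d C
end

section
/- Let A be an I×I complex matrix and k ∈ I an index with a_{kk} = 0, and suppose that for every i ∈ I one has a_{ik} = 0 if and only if a_{ki} = 0 (regularity at k). Then r_k(r_k(A)) = D·A, where D is the invertible diagonal matrix with D_{kk} = 1 and, for i ≠ k, D_{ii} = a_{ki}² if a_{ki} ≠ 0 and D_{ii} = 1 if a_{ki} = 0. In particular, the twice-reflected matrix r_k(r_k(A)) agrees with A after multiplying each row by a nonzero scalar, so the odd reflection at a regular isotropic index is an involution up to row rescaling. -/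
/-!
`r_k` fixes row `k` and replaces `A i k` by `-(A k i * A i k)`, so `i` is isolated from `k`
in `r_k(A)` (both entries `i k` and `k i` vanish) iff `A k i = 0`, which by regularity means
that `i` is isolated in `A`. Hence both reflections take the same branch of the definition
at every entry: isolated rows are untouched, and on a row linked to `k` the column-`k`
correction terms of the first reflection cancel against those of the second, leaving
`A k i ^ 2 * A i j`.
-/

open scoped Classical in
/-- The odd reflection `r_k(A)` of a square complex matrix `A` at an index `k`
(with `A k k = 0`). -/
noncomputable def oddReflection {I : Type*} [DecidableEq I]
    (A : Matrix I I ℂ) (k : I) : Matrix I I ℂ :=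
  Matrix.of fun i j =>
    if i = k then A k j
    else if j = k then -(A k i * A i k)
    else if A i k = 0 ∧ A k i = 0 then A i j
    else if A j k = 0 ∧ A k j = 0 then A k i * A i j
    else A k i * A i j + A k j * A i k + A k i * A i k

open Matrix

section OddReflection

variable {I : Type*} [DecidableEq I] (A : Matrix I I ℂ) (k : I) {i j : I}

@[simp]
lemma oddReflection_apply_self_left (j : I) : oddReflection A k k j = A k j := by
  simp [oddReflection]

lemma oddReflection_apply_self_right (hi : i ≠ k) :
    oddReflection A k i k = -(A k i * A i k) := by
  simp [oddReflection, hi]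

lemma oddReflection_apply_of_isolated (hi : i ≠ k) (hj : j ≠ k)
    (hik : A i k = 0) (hki : A k i = 0) : oddReflection A k i j = A i j := by
  simp [oddReflection, hi, hj, hik, hki]

lemma oddReflection_apply_of_linked_of_isolated (hi : i ≠ k) (hj : j ≠ k)
    (hi' : ¬(A i k = 0 ∧ A k i = 0)) (hj' : A j k = 0 ∧ A k j = 0) :
    oddReflection A k i j = A k i * A i j := by
  simp only [oddReflection, of_apply, if_neg hi, if_neg hj, if_neg hi', if_pos hj']

lemma oddReflection_apply_of_linked (hi : i ≠ k) (hj : j ≠ k)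
    (hi' : ¬(A i k = 0 ∧ A k i = 0)) (hj' : ¬(A j k = 0 ∧ A k j = 0)) :
    oddReflection A k i j = A k i * A i j + A k j * A i k + A k i * A i k := by
  simp only [oddReflection, of_apply, if_neg hi, if_neg hj, if_neg hi', if_neg hj']

lemma oddReflection_isolated_iff (hj : j ≠ k) :
    (oddReflection A k j k = 0 ∧ oddReflection A k k j = 0) ↔ A k j = 0 := by
  rw [oddReflection_apply_self_right A k hj, oddReflection_apply_self_left]
  simp only [neg_eq_zero, mul_eq_zero]
  tauto

lemma oddReflection_oddReflection_apply_of_isolated (hi : i ≠ k)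
    (hik : A i k = 0) (hki : A k i = 0) :
    oddReflection (oddReflection A k) k i j = A i j := by
  by_cases hj : j = k
  · subst hj
    simp [oddReflection_apply_self_right _ _ hi, hik, hki]
  · have hisol : oddReflection A k i k = 0 ∧ oddReflection A k k i = 0 :=
      (oddReflection_isolated_iff A k hi).2 hki
    rw [oddReflection_apply_of_isolated _ k hi hj hisol.1 hisol.2,
      oddReflection_apply_of_isolated A k hi hj hik hki]

lemma oddReflection_oddReflection_apply_of_linked
    (hreg : ∀ j, A k j = 0 → A j k = 0) (hi : i ≠ k) (hki : A k i ≠ 0) :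
    oddReflection (oddReflection A k) k i j = A k i ^ 2 * A i j := by
  have hi' : ¬(A i k = 0 ∧ A k i = 0) := fun h => hki h.2
  have hri' : ¬(oddReflection A k i k = 0 ∧ oddReflection A k k i = 0) :=
    (oddReflection_isolated_iff A k hi).not.2 hki
  by_cases hj : j = k
  · subst hj
    rw [oddReflection_apply_self_right _ _ hi, oddReflection_apply_self_left,
      oddReflection_apply_self_right _ _ hi]
    ring
  by_cases hkj : A k j = 0
  · have hrj' := (oddReflection_isolated_iff A k hj).2 hkj
    rw [oddReflection_apply_of_linked_of_isolated _ k hi hj hri' hrj',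
      oddReflection_apply_of_linked_of_isolated A k hi hj hi' ⟨hreg j hkj, hkj⟩,
      oddReflection_apply_self_left]
    ring
  · have hrj' := (oddReflection_isolated_iff A k hj).not.2 hkj
    rw [oddReflection_apply_of_linked _ k hi hj hri' hrj',
      oddReflection_apply_of_linked A k hi hj hi' fun h => hkj h.2,
      oddReflection_apply_self_left, oddReflection_apply_self_left,
      oddReflection_apply_self_right _ _ hi]
    ring

noncomputable def oddReflectionRowScale (i : I) : ℂ :=
  if i = k then 1 else if A k i ≠ 0 then A k i ^ 2 else 1

lemma oddReflectionRowScale_ne_zero (i : I) : oddReflectionRowScale A k i ≠ 0 := by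
  unfold oddReflectionRowScale
  split_ifs with _ hki
  exacts [one_ne_zero, pow_ne_zero 2 hki, one_ne_zero]

lemma oddReflection_oddReflection_apply (hreg : ∀ j, A k j = 0 → A j k = 0) (i j : I) :
    oddReflection (oddReflection A k) k i j = oddReflectionRowScale A k i * A i j := by
  unfold oddReflectionRowScale
  by_cases hi : i = k
  · subst hi
    simp
  by_cases hki : A k i = 0
  · simp [hi, hki, oddReflection_oddReflection_apply_of_isolated A k hi (hreg i hki) hki]
  · simp [hi, hki, oddReflection_oddReflection_apply_of_linked A k hreg hi hki]

theorem oddReflection_oddReflection [Fintype I] (hreg : ∀ j, A k j = 0 → A j k = 0) :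
    oddReflection (oddReflection A k) k = diagonal (oddReflectionRowScale A k) * A := by
  ext i j
  rw [diagonal_mul, oddReflection_oddReflection_apply A k hreg]

lemma isUnit_diagonal_oddReflectionRowScale [Fintype I] :
    IsUnit (diagonal (oddReflectionRowScale A k)) :=
  isUnit_diagonal.2 <| Pi.isUnit_iff.2 fun i =>
    (oddReflectionRowScale_ne_zero A k i).isUnit

end OddReflection

open scoped Classical in
theorem oddReflection_involutive_up_to_row_rescaling_general
    {I : Type*} [Fintype I] [DecidableEq I] (A : Matrix I I ℂ) (k : I)
    (hreg : ∀ i : I, A i k = 0 ↔ A k i = 0) :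
    oddReflection (oddReflection A k) k =
      Matrix.diagonal (fun i => if i = k then 1 else
        if A k i ≠ 0 then (A k i) ^ 2 else 1) * A ∧
    IsUnit (Matrix.diagonal (fun i : I => if i = k then 1 else
        if A k i ≠ 0 then (A k i) ^ 2 else (1 : ℂ))) :=
  ⟨oddReflection_oddReflection A k fun j => (hreg j).2,
    isUnit_diagonal_oddReflectionRowScale A k⟩

open scoped Classical in
/-- Reflecting twice at a regular isotropic index `k` returns the original matrix up to
multiplying each row by a nonzero scalar: `r_k(r_k(A)) = D • A` for an invertible
diagonal matrix `D` with `D k k = 1` and `D i i = (A k i)²` when `A k i ≠ 0`. -/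
theorem oddReflection_involutive_up_to_row_rescaling
    {I : Type*} [Fintype I] [DecidableEq I] (A : Matrix I I ℂ) (k : I)
    (h0 : A k k = 0) (hreg : ∀ i : I, A i k = 0 ↔ A k i = 0) :
    oddReflection (oddReflection A k) k =
      Matrix.diagonal (fun i => if i = k then 1 else
        if A k i ≠ 0 then (A k i) ^ 2 else 1) * A ∧
    IsUnit (Matrix.diagonal (fun i : I => if i = k then 1 else
        if A k i ≠ 0 then (A k i) ^ 2 else (1 : ℂ))) :=
  oddReflection_involutive_up_to_row_rescaling_general A k hreg
end

section
/- Let A be an I×I complex matrix and k ∈ I an index with a_{kk} = 0, and let i ∈ I with i ≠ k. If the i-th row of A is zero, then the i-th row of r_k(A) is zero. Conversely, if a_{ik} = 0 if and only if a_{ki} = 0, and the i-th row of r_k(A) is zero, then the i-th row of A is zero. Moreover the k-th row of r_k(A) equals the k-th row of A. In particular, under the regularity hypothesis, A has a zero row if and only if r_k(A) has a zero row. -/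
namespace oddReflection

variable {I : Type*} [DecidableEq I] (A : Matrix I I ℂ) (k : I)

theorem apply_self_row (j : I) : oddReflection A k k j = A k j := by
  simp [oddReflection]

theorem apply_self_col {i : I} (hik : i ≠ k) :
    oddReflection A k i k = -(A k i * A i k) := by
  simp [oddReflection, hik]

theorem apply_of_eq_zero {i j : I} (hik : i ≠ k) (hjk : j ≠ k)
    (hi : A i k = 0) (hk : A k i = 0) : oddReflection A k i j = A i j := by
  simp [oddReflection, hik, hjk, hi, hk]

variable {A k}

theorem row_eq_zero {i : I} (hik : i ≠ k) (h : ∀ j, A i j = 0) :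
    ∀ j, oddReflection A k i j = 0 := by
  intro j
  simp only [oddReflection, Matrix.of_apply, if_neg hik, h, mul_zero, add_zero, neg_zero]
  split_ifs <;> rfl

theorem row_eq_zero_of_oddReflection {i : I} (hik : i ≠ k) (hreg : A i k = 0 ↔ A k i = 0)
    (h : ∀ j, oddReflection A k i j = 0) : ∀ j, A i j = 0 := by
  have hik0 : A i k = 0 := by
    have := h k
    rw [apply_self_col A k hik, neg_eq_zero, mul_eq_zero] at this
    exact this.elim hreg.mpr id
  intro j
  by_cases hjk : j = k
  · exact hjk ▸ hik0
  · rw [← apply_of_eq_zero A k hik hjk hik0 (hreg.mp hik0)]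
    exact h j

theorem exists_row_eq_zero_iff (hreg : ∀ l, A l k = 0 ↔ A k l = 0) :
    (∃ l, ∀ j, A l j = 0) ↔ ∃ l, ∀ j, oddReflection A k l j = 0 := by
  constructor
  all_goals
    rintro ⟨l, hl⟩
    refine ⟨l, ?_⟩
    rcases eq_or_ne l k with rfl | hlk
    · simpa [apply_self_row] using hl
  · exact row_eq_zero hlk hl
  · exact row_eq_zero_of_oddReflection hlk (hreg l) hl

end oddReflection

theorem oddReflection_zero_rows_general
    {I : Type*} [DecidableEq I] (A : Matrix I I ℂ) (k i : I)
    (hik : i ≠ k) :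
    ((∀ j, A i j = 0) → ∀ j, oddReflection A k i j = 0) ∧
    ((A i k = 0 ↔ A k i = 0) →
      (∀ j, oddReflection A k i j = 0) → ∀ j, A i j = 0) ∧
    (∀ j, oddReflection A k k j = A k j) ∧
    ((∀ l : I, A l k = 0 ↔ A k l = 0) →
      ((∃ l, ∀ j, A l j = 0) ↔ (∃ l, ∀ j, oddReflection A k l j = 0))) :=
  ⟨oddReflection.row_eq_zero hik, oddReflection.row_eq_zero_of_oddReflection hik,
    oddReflection.apply_self_row A k, oddReflection.exists_row_eq_zero_iff⟩

/-- **Lemma 4.4.** Odd reflections preserve zero rows: if the `i`-th row of `A` is zero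
then so is the `i`-th row of `r_k(A)`; conversely (under regularity at `i`) a zero
`i`-th row of `r_k(A)` forces a zero `i`-th row of `A`.  The `k`-th row is unchanged.
Consequently, under the regularity hypothesis, `A` has a zero row iff `r_k(A)` does
(an odd reflection of an elemental matrix is elemental). -/
theorem oddReflection_zero_rows
    {I : Type*} [DecidableEq I] (A : Matrix I I ℂ) (k i : I)
    (h0 : A k k = 0) (hik : i ≠ k) :
    ((∀ j, A i j = 0) → ∀ j, oddReflection A k i j = 0) ∧
    ((A i k = 0 ↔ A k i = 0) →
      (∀ j, oddReflection A k i j = 0) → ∀ j, A i j = 0) ∧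
    (∀ j, oddReflection A k k j = A k j) ∧
    ((∀ l : I, A l k = 0 ↔ A k l = 0) →
      ((∃ l, ∀ j, A l j = 0) ↔ (∃ l, ∀ j, oddReflection A k l j = 0))) :=
  oddReflection_zero_rows_general A k i hik
end

section
/- For complex numbers a, b, x, let M(x) denote the 3×3 matrix with rows (a, 0, b), (0, 0, 1), (x, -2, 2). Then the odd reflection of M(x) at the index 2 equals the matrix with rows (a, 0, b), (0, 0, 1), (x, 2, -2); after multiplying its third row by -1 this is exactly M(-x). Consequently, if the (3,1)-entries of both M(x) and the row-rescaled reflected matrix M(-x) are required to be nonpositive real numbers, then x = 0; in particular, for x ≠ 0 the matrix M(x) and its odd reflection at index 2 cannot both satisfy the condition that every off-diagonal entry in a row with diagonal entry 2 is a nonpositive integer. -/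
/-- The generalized-Cartan-matrix condition relevant here: in every row whose diagonal
entry is `2`, all off-diagonal entries are nonpositive integers. -/
def RowCondition {n : ℕ} (B : Matrix (Fin n) (Fin n) ℂ) : Prop :=
  ∀ i j : Fin n, B i i = 2 → i ≠ j → ∃ m : ℤ, m ≤ 0 ∧ B i j = (m : ℂ)

theorem Complex.eq_zero_of_nonpos_real_of_neg_nonpos_real {x : ℂ}
    (hx : ∃ r : ℝ, x = (r : ℂ) ∧ r ≤ 0) (hnx : ∃ r : ℝ, -x = (r : ℂ) ∧ r ≤ 0) : x = 0 := by
  obtain ⟨r, rfl, hr⟩ := hx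
  obtain ⟨s, hs, hs0⟩ := hnx
  have hrs : -r = s := by exact_mod_cast hs
  have : r = 0 := by linarith
  simp [this]

theorem RowCondition.exists_nonpos_real {n : ℕ} {B : Matrix (Fin n) (Fin n) ℂ}
    (hB : RowCondition B) {i j : Fin n} (hi : B i i = 2) (hij : i ≠ j) :
    ∃ r : ℝ, B i j = (r : ℂ) ∧ r ≤ 0 := by
  obtain ⟨m, hm, hBm⟩ := hB i j hi hij
  exact ⟨m, by exact_mod_cast hBm, by exact_mod_cast hm⟩

theorem oddReflection_one_eq (a b x : ℂ) :
    oddReflection !![a, 0, b; 0, 0, 1; x, -2, 2] 1 = !![a, 0, b; 0, 0, 1; x, 2, -2] := by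
  ext i j
  fin_cases i <;> fin_cases j <;> simp [oddReflection]

theorem neg_row_two_reflected_eq (a b x : ℂ) :
    (Matrix.of fun i j : Fin 3 =>
        (if i = 2 then (-1 : ℂ) else 1) * !![a, 0, b; 0, 0, 1; x, 2, -2] i j)
      = !![a, 0, b; 0, 0, 1; -x, -2, 2] := by
  ext i j
  fin_cases i <;> fin_cases j <;> simp

/-- **Lemma 7.3.** Let `M(x)` be the matrix with rows `(a,0,b)`, `(0,0,1)`, `(x,-2,2)`.
Its odd reflection at the second index has rows `(a,0,b)`, `(0,0,1)`, `(x,2,-2)`;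
multiplying the third row by `-1` yields exactly `M(-x)`.  Hence if the `(3,1)`-entries
of `M(x)` and `M(-x)` are both nonpositive reals then `x = 0`; in particular for
`x ≠ 0` the matrices `M(x)` and `M(-x)` cannot both satisfy the condition that every
off-diagonal entry in a row with diagonal entry `2` is a nonpositive integer. -/
theorem oddReflection_not_admissible (a b x : ℂ) :
    oddReflection !![a, 0, b; 0, 0, 1; x, -2, 2] 1 = !![a, 0, b; 0, 0, 1; x, 2, -2] ∧
    (Matrix.of fun i j : Fin 3 =>
        (if i = 2 then (-1 : ℂ) else 1) * oddReflection !![a, 0, b; 0, 0, 1; x, -2, 2] 1 i j)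
      = !![a, 0, b; 0, 0, 1; -x, -2, 2] ∧
    ((∃ r : ℝ, x = (r : ℂ) ∧ r ≤ 0) → (∃ r : ℝ, -x = (r : ℂ) ∧ r ≤ 0) → x = 0) ∧
    (x ≠ 0 →
      ¬ (RowCondition !![a, 0, b; 0, 0, 1; x, -2, 2] ∧
         RowCondition !![a, 0, b; 0, 0, 1; -x, -2, 2])) := by
  refine ⟨oddReflection_one_eq a b x, ?_, fun hx hnx => ?_, fun hx ⟨hM, hM'⟩ => hx ?_⟩
  · rw [oddReflection_one_eq, neg_row_two_reflected_eq]
  · exact Complex.eq_zero_of_nonpos_real_of_neg_nonpos_real hx hnx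
  · exact Complex.eq_zero_of_nonpos_real_of_neg_nonpos_real
      (hM.exists_nonpos_real (i := 2) (j := 0) rfl (by decide))
      (hM'.exists_nonpos_real (i := 2) (j := 0) rfl (by decide))
end
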